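/- arXiv:2208.12626 — 2 statements merged into one kernel-verified Lean document; each statement's English description precedes it below -/
import Mathlib

section
/- Let n ≥ 3 and assume condition (ON). For any two vertices S, W of G(V), there exists a walk of length 3 from S to W in G(V) if and only if (K does not have exactly 4 elements, or n ≠ 3, or S + W is non-degenerate). -/
namespace FramePaper

variable {K : Type*} [Field K]

/-- The standard Hermitian form `Ψ(v,w) = ∑ i, v i * τ (w i)` on `Fin n → K`. -/
def Psi (τ : K → K) {n : ℕ} (v w : Fin n → K) : K :=
  ∑ i, v i * τ (w i)

lemma Psi_add_left (τ : K → K) {n : ℕ} (a b w : Fin n → K) :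
    Psi τ (a + b) w = Psi τ a w + Psi τ b w := by
  simp [Psi, add_mul, Finset.sum_add_distrib]

lemma Psi_smul_left (τ : K → K) {n : ℕ} (c : K) (a w : Fin n → K) :
    Psi τ (c • a) w = c * Psi τ a w := by
  simp [Psi, Finset.mul_sum, mul_assoc]

/-- The orthogonal complement `S^⊥ = {v | ∀ s ∈ S, Ψ(v,s) = 0}`. -/
def perp (τ : K → K) {n : ℕ} (S : Submodule K (Fin n → K)) :
    Submodule K (Fin n → K) where
  carrier := {v | ∀ s ∈ S, Psi τ v s = 0}
  add_mem' := by
    intro a b ha hb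
    show ∀ s ∈ S, Psi τ (a + b) s = 0
    intro s hs
    rw [Psi_add_left, ha s hs, hb s hs, add_zero]
  zero_mem' := by
    show ∀ s ∈ S, Psi τ 0 s = 0
    intro s hs
    simp [Psi]
  smul_mem' := by
    intro c a ha
    show ∀ s ∈ S, Psi τ (c • a) s = 0
    intro s hs
    rw [Psi_smul_left, ha s hs, mul_zero]

/-- A subspace `S` is non-degenerate iff `S ⊓ S^⊥ = ⊥`. -/
def Nondeg (τ : K → K) {n : ℕ} (S : Submodule K (Fin n → K)) : Prop :=
  S ⊓ perp τ S = ⊥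

/-- Vertices of `G(V)`: the `1`-dimensional non-degenerate subspaces. -/
def IsVertex (τ : K → K) {n : ℕ} (S : Submodule K (Fin n → K)) : Prop :=
  Module.finrank K S = 1 ∧ Nondeg τ S

/-- The graph `G(V)` on the `1`-dimensional non-degenerate subspaces of `V = Fin n → K`,
with `S, W` adjacent iff `S ≠ W` and `Ψ(s,w) = 0` for all `s ∈ S`, `w ∈ W`. -/
def FrameGraph (τ : K →+* K) (hτ2 : ∀ x, τ (τ x) = x) (n : ℕ) :
    SimpleGraph {S : Submodule K (Fin n → K) // IsVertex (⇑τ) S} where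
  Adj S W := S ≠ W ∧ ∀ s ∈ S.1, ∀ w ∈ W.1, Psi (⇑τ) s w = 0
  symm := ⟨by
    rintro S W ⟨hne, h⟩
    refine ⟨hne.symm, fun w hw s hs => ?_⟩
    have key : Psi (⇑τ) w s = τ (Psi (⇑τ) s w) := by
      simp only [Psi, map_sum, map_mul, hτ2]
      exact Finset.sum_congr rfl fun i _ => mul_comm _ _
    rw [key, h s hs w hw, map_zero]⟩
  loopless := ⟨fun S h => h.1 rfl⟩

/-!
Write `S = ⟨s⟩`, `W = ⟨w⟩`. A walk `S, A, B, W` amounts to anisotropic vectors `a, b` with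
`s ⊥ a ⊥ b ⊥ w`, and the argument is dimension counting with `dim U^⊥ = n - dim U`.

If `⟨s, w⟩^⊥` contains an anisotropic `c`, take `a = c` and `b` anisotropic in `⟨c, w⟩^⊥`.
Otherwise `⟨s, w⟩^⊥` is totally isotropic and orthogonal to `s`, which forces `n = 3`,
`⟨s, w⟩^⊥ = ⟨d⟩` with `d` isotropic, and `⟨s, w⟩` degenerate. Then `a = a₀ + l d` and
`b = b₀ + μ d` work, for `a₀ ⊥ s` and `b₀ ⊥ w` normalised by `Ψ(d, a₀) = Ψ(d, b₀) = 1`, as soon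
as `μ + τ μ` can avoid two values of the fixed field of `τ`; that field has at least three
elements exactly when `|K| ≠ 4`.

Over `𝔽₄` the fixed field is `𝔽₂`, so for orthogonal anisotropic `x, y` every `α x + β y`
with `α, β ≠ 0` is isotropic: its norm is `1 + 1 = 0`. For `n = 3` and `e` spanning
`⟨a, b⟩^⊥`, this puts `s` on `⟨b⟩` or `⟨e⟩` and `w` on `⟨a⟩` or `⟨e⟩`; in every case
`s ⊥ w` or `⟨s⟩ = ⟨w⟩`, so `⟨s, w⟩` is non-degenerate.
-/

open Module Submodule

lemma _root_.SimpleGraph.exists_walk_length_eq_three_iff {V : Type*} {G : SimpleGraph V}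
    {u v : V} : (∃ p : G.Walk u v, p.length = 3) ↔ ∃ a b, G.Adj u a ∧ G.Adj a b ∧ G.Adj b v := by
  constructor
  · rintro ⟨p, hp⟩
    rcases p with _ | ⟨h₁, _ | ⟨h₂, _ | ⟨h₃, _ | ⟨_, p⟩⟩⟩⟩
    all_goals simp at hp
    exact ⟨_, _, h₁, h₂, h₃⟩
  · rintro ⟨a, b, h₁, h₂, h₃⟩
    exact ⟨.cons h₁ (.cons h₂ (.cons h₃ .nil)), rfl⟩

lemma finrank_sup_span_singleton_le {V : Type*} [AddCommGroup V] [Module K V] (s w : V) :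
    finrank K (K ∙ s ⊔ K ∙ w : Submodule K V) ≤ 2 := by
  have h₁ (v : V) : finrank K (K ∙ v) ≤ 1 := (finrank_span_le_card {v}).trans (by simp)
  exact (finrank_add_le_finrank_add_finrank _ _).trans (add_le_add (h₁ s) (h₁ w))

section

variable {τ : K →+* K} {n : ℕ} {U W : Submodule K (Fin n → K)}

lemma Psi_add_right (v a b : Fin n → K) :
    Psi τ v (a + b) = Psi τ v a + Psi τ v b := by
  simp [Psi, mul_add, Finset.sum_add_distrib]

lemma Psi_smul_right (c : K) (v w : Fin n → K) : Psi τ v (c • w) = τ c * Psi τ v w := by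
  simp only [Psi, Pi.smul_apply, smul_eq_mul, map_mul, Finset.mul_sum]
  exact Finset.sum_congr rfl fun i _ => by ring

lemma Psi_swap (hτ2 : ∀ x, τ (τ x) = x) (v w : Fin n → K) : Psi τ w v = τ (Psi τ v w) := by
  simp only [Psi, map_sum, map_mul, hτ2]
  exact Finset.sum_congr rfl fun i _ => mul_comm _ _

lemma Psi_eq_zero_comm (hτ2 : ∀ x, τ (τ x) = x) {v w : Fin n → K} :
    Psi τ v w = 0 ↔ Psi τ w v = 0 := by
  rw [Psi_swap hτ2 v w, map_eq_zero]

lemma ne_zero_of_Psi_self_ne_zero {v : Fin n → K} (hv : Psi τ v v ≠ 0) : v ≠ 0 := by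
  rintro rfl
  simp [Psi] at hv

variable (τ) in
def psiDual : (Fin n → K) →ₛₗ[τ] Module.Dual K (Fin n → K) where
  toFun w :=
    { toFun := fun v => Psi τ v w
      map_add' := fun a b => Psi_add_left τ a b w
      map_smul' := fun c a => Psi_smul_left τ c a w }
  map_add' a b := LinearMap.ext fun v => Psi_add_right v a b
  map_smul' c a := LinearMap.ext fun v => Psi_smul_right c v a

@[simp] lemma psiDual_apply (v w : Fin n → K) : psiDual τ w v = Psi τ v w := rfl

lemma psiDual_injective : Function.Injective (psiDual τ (n := n)) := by
  refine (injective_iff_map_eq_zero _).mpr fun w hw => funext fun j => ?_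
  have := LinearMap.congr_fun hw (Pi.single j 1)
  simpa [Psi, Pi.single_apply] using this

lemma mem_perp {v : Fin n → K} :
    v ∈ perp τ U ↔ ∀ u ∈ U, Psi τ v u = 0 := Iff.rfl

lemma finrank_perp_add_finrank (hτ2 : ∀ x, τ (τ x) = x) (U : Submodule K (Fin n → K)) :
    finrank K (perp τ U) + finrank K U = n := by
  have : RingHomInvPair τ τ := ⟨RingHom.ext hτ2, RingHom.ext hτ2⟩
  have hperp : perp τ U = (U.map (psiDual τ)).dualCoannihilator := by
    ext v
    simp [mem_perp, Submodule.mem_dualCoannihilator]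
  have hmap : finrank K (U.map (psiDual τ)) = finrank K U := by
    let e := U.equivMapOfInjective (psiDual τ) psiDual_injective
    exact (congrArg Cardinal.toNat (rank_eq_of_equiv_equiv τ e.toAddEquiv
      (Function.bijective_iff_has_inverse.mpr ⟨τ, hτ2, hτ2⟩) (map_smulₛₗ e))).symm
  rw [hperp, ← hmap, add_comm, Subspace.finrank_add_finrank_dualCoannihilator_eq,
    Module.finrank_fin_fun]

lemma mem_perp_span_singleton {v w : Fin n → K} : v ∈ perp τ (K ∙ w) ↔ Psi τ v w = 0 :=
  ⟨fun h => h w (mem_span_singleton_self w), fun h u hu => by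
    obtain ⟨c, rfl⟩ := mem_span_singleton.mp hu
    rw [Psi_smul_right, h, mul_zero]⟩

lemma perp_sup : perp τ (U ⊔ W) = perp τ U ⊓ perp τ W := by
  ext v
  refine ⟨fun h => ⟨fun _ hu => h _ (mem_sup_left hu), fun _ hw => h _ (mem_sup_right hw)⟩, ?_⟩
  rintro ⟨hU, hW⟩ x hx
  obtain ⟨u, hu, w, hw, rfl⟩ := mem_sup.mp hx
  rw [Psi_add_right, hU u hu, hW w hw, add_zero]

lemma le_perp_comm (hτ2 : ∀ x, τ (τ x) = x) : U ≤ perp τ W ↔ W ≤ perp τ U :=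
  ⟨fun h _ hw _ hu => (Psi_eq_zero_comm hτ2).mp (h hu _ hw),
    fun h _ hu _ hw => (Psi_eq_zero_comm hτ2).mp (h hw _ hu)⟩

lemma perp_perp (hτ2 : ∀ x, τ (τ x) = x) (U : Submodule K (Fin n → K)) :
    perp τ (perp τ U) = U := by
  refine (eq_of_le_of_finrank_eq ((le_perp_comm hτ2).mp le_rfl) ?_).symm
  have h₁ := finrank_perp_add_finrank hτ2 U
  have h₂ := finrank_perp_add_finrank hτ2 (perp τ U)
  omega

lemma eq_perp_of_le_perp (hτ2 : ∀ x, τ (τ x) = x) (hWU : W ≤ perp τ U)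
    (hdim : finrank K W + finrank K U = n) : W = perp τ U :=
  eq_of_le_of_finrank_eq hWU (by have := finrank_perp_add_finrank hτ2 U; omega)

lemma Nondeg.inf_eq_bot (hU : Nondeg τ U) (hWU : W ≤ perp τ U) : U ⊓ W = ⊥ :=
  eq_bot_iff.mpr <| hU ▸ inf_le_inf_left U hWU

lemma nondeg_perp (hτ2 : ∀ x, τ (τ x) = x) (hU : Nondeg τ U) : Nondeg τ (perp τ U) := by
  rw [Nondeg, perp_perp hτ2, inf_comm]
  exact hU

lemma Nondeg.sup (hτ2 : ∀ x, τ (τ x) = x) (hU : Nondeg τ U) (hW : Nondeg τ W)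
    (hWU : W ≤ perp τ U) : Nondeg τ (U ⊔ W) := by
  have hUW : U ≤ perp τ W := (le_perp_comm hτ2).mp hWU
  refine eq_bot_iff.mpr fun x ⟨hx, hxperp⟩ => ?_
  obtain ⟨u, hu, w, hw, rfl⟩ := mem_sup.mp hx
  rw [perp_sup] at hxperp
  have hu0 : u ∈ U ⊓ perp τ U := ⟨hu, fun y hy => by
    simpa [Psi_add_left, hWU hw y hy] using hxperp.1 y hy⟩
  have hw0 : w ∈ W ⊓ perp τ W := ⟨hw, fun y hy => by
    simpa [Psi_add_left, hUW hu y hy] using hxperp.2 y hy⟩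
  rw [Nondeg] at hU hW
  rw [hU, mem_bot] at hu0
  rw [hW, mem_bot] at hw0
  simp [hu0, hw0]

lemma nondeg_span_singleton {a : Fin n → K} (ha : Psi τ a a ≠ 0) : Nondeg τ (K ∙ a) := by
  refine eq_bot_iff.mpr fun x ⟨hx, hxperp⟩ => ?_
  obtain ⟨c, rfl⟩ := mem_span_singleton.mp hx
  have := mem_perp_span_singleton.mp hxperp
  rw [Psi_smul_left, mul_eq_zero] at this
  simp [this.resolve_right ha]

lemma finrank_sup_of_le_perp (hU : Nondeg τ U) (hWU : W ≤ perp τ U) :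
    finrank K (U ⊔ W : Submodule K (Fin n → K)) = finrank K U + finrank K W := by
  rw [← finrank_sup_add_finrank_inf_eq, hU.inf_eq_bot hWU, finrank_bot, add_zero]

lemma le_perp_self_of_Psi_self_eq_zero (hτne : (τ : K → K) ≠ id) (hτ2 : ∀ x, τ (τ x) = x)
    (h : ∀ x ∈ U, Psi τ x x = 0) : U ≤ perp τ U := by
  obtain ⟨c, hc⟩ := Function.ne_iff.mp hτne
  intro x hx y hy
  have hxy := h _ (add_mem hx hy)
  have hxcy := h _ (add_mem hx (U.smul_mem c hy))
  simp only [Psi_add_left, Psi_add_right, Psi_smul_left, Psi_smul_right, h x hx, h y hy,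
    Psi_swap hτ2 x y] at hxy hxcy
  -- polarization with `x + y` and `x + c y`, where `τ c ≠ c`
  have : (τ c - c) * Psi τ x y = 0 := by linear_combination hxcy - c * hxy
  exact (mul_eq_zero.mp this).resolve_left (sub_ne_zero.mpr hc)

lemma two_mul_finrank_add_finrank_le (hτ2 : ∀ x, τ (τ x) = x) (hU : U ≤ perp τ U)
    (hW : Nondeg τ W) (hUW : U ≤ perp τ W) : 2 * finrank K U + finrank K W ≤ n := by
  have hsup : finrank K (W ⊔ U : Submodule K (Fin n → K)) = finrank K W + finrank K U :=
    finrank_sup_of_le_perp hW hUW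
  have hle := finrank_mono (sup_le ((le_perp_comm hτ2).mp hUW) hU)
  have := finrank_perp_add_finrank hτ2 U
  omega

lemma Nondeg.exists_Psi_self_ne_zero (hτne : (τ : K → K) ≠ id) (hτ2 : ∀ x, τ (τ x) = x)
    (hU : Nondeg τ U) (hU0 : U ≠ ⊥) : ∃ x ∈ U, Psi τ x x ≠ 0 := by
  by_contra! h
  exact hU0 (by rw [← hU, inf_eq_left.mpr (le_perp_self_of_Psi_self_eq_zero hτne hτ2 h)])

lemma exists_anisotropic_perp_pair (hτne : (τ : K → K) ≠ id) (hτ2 : ∀ x, τ (τ x) = x)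
    (hn : 3 ≤ n) {x y : Fin n → K} (hx : Psi τ x x ≠ 0) (hy : Psi τ y y ≠ 0)
    (hxy : Psi τ x y = 0) : ∃ z, Psi τ z z ≠ 0 ∧ Psi τ z x = 0 ∧ Psi τ z y = 0 := by
  have hyx : K ∙ y ≤ perp τ (K ∙ x) := (span_singleton_le_iff_mem _ _).mpr
    (mem_perp_span_singleton.mpr ((Psi_eq_zero_comm hτ2).mp hxy))
  have hN := (nondeg_span_singleton hx).sup hτ2 (nondeg_span_singleton hy) hyx
  have hperp0 : perp τ (K ∙ x ⊔ K ∙ y) ≠ ⊥ := by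
    intro hbot
    have := finrank_perp_add_finrank hτ2 (K ∙ x ⊔ K ∙ y)
    rw [hbot, finrank_bot, finrank_sup_of_le_perp (nondeg_span_singleton hx) hyx,
      finrank_span_singleton (ne_zero_of_Psi_self_ne_zero hx),
      finrank_span_singleton (ne_zero_of_Psi_self_ne_zero hy)] at this
    omega
  obtain ⟨z, hzN, hz⟩ := (nondeg_perp hτ2 hN).exists_Psi_self_ne_zero hτne hτ2 hperp0
  rw [perp_sup, mem_inf, mem_perp_span_singleton, mem_perp_span_singleton] at hzN
  exact ⟨z, hz, hzN⟩

lemma IsVertex.exists_eq_span {S : Submodule K (Fin n → K)} (h : IsVertex τ S) :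
    ∃ s, Psi τ s s ≠ 0 ∧ S = K ∙ s := by
  obtain ⟨s, hsS, hs0⟩ := S.ne_bot_iff.mp fun hbot => by
    simpa [Submodule.finrank_eq_zero.mpr hbot] using h.1
  have hS := eq_span_singleton_of_mem_of_finrank_eq_one h.1 hsS hs0
  refine ⟨s, fun hss => hs0 ?_, hS⟩
  have : s ∈ S ⊓ perp τ S := ⟨hsS, hS ▸ mem_perp_span_singleton.mpr hss⟩
  rwa [h.2, mem_bot] at this

lemma isVertex_span_singleton {a : Fin n → K} (ha : Psi τ a a ≠ 0) : IsVertex τ (K ∙ a) :=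
  ⟨finrank_span_singleton (ne_zero_of_Psi_self_ne_zero ha), nondeg_span_singleton ha⟩

lemma frameGraph_adj_iff (hτ2 : ∀ x, τ (τ x) = x)
    {X Y : {S : Submodule K (Fin n → K) // IsVertex τ S}} :
    (FrameGraph τ hτ2 n).Adj X Y ↔ X.1 ≤ perp τ Y.1 := by
  refine ⟨fun h x hx y hy => h.2 x hx y hy, fun h => ⟨?_, fun x hx y hy => h hx y hy⟩⟩
  rintro rfl
  have hbot : X.1 = ⊥ := by rw [← X.2.2, inf_eq_left.mpr h]
  simpa [Submodule.finrank_eq_zero.mpr hbot] using X.2.1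

lemma frameGraph_adj_iff_Psi (hτ2 : ∀ x, τ (τ x) = x)
    {X Y : {S : Submodule K (Fin n → K) // IsVertex τ S}} {x y : Fin n → K}
    (hX : X.1 = K ∙ x) (hY : Y.1 = K ∙ y) : (FrameGraph τ hτ2 n).Adj X Y ↔ Psi τ x y = 0 := by
  rw [frameGraph_adj_iff, hX, hY, span_singleton_le_iff_mem, mem_perp_span_singleton]

variable (τ) in
def HasOrthoChain (s w : Fin n → K) : Prop :=
  ∃ a b, Psi τ a a ≠ 0 ∧ Psi τ b b ≠ 0 ∧ Psi τ s a = 0 ∧ Psi τ a b = 0 ∧ Psi τ b w = 0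

lemma exists_walk_length_eq_three_iff_hasOrthoChain (hτ2 : ∀ x, τ (τ x) = x)
    {S W : {S : Submodule K (Fin n → K) // IsVertex τ S}} {s w : Fin n → K}
    (hS : S.1 = K ∙ s) (hW : W.1 = K ∙ w) :
    (∃ p : (FrameGraph τ hτ2 n).Walk S W, p.length = 3) ↔ HasOrthoChain τ s w := by
  rw [SimpleGraph.exists_walk_length_eq_three_iff]
  constructor
  · rintro ⟨A, B, hSA, hAB, hBW⟩
    obtain ⟨a, ha, hA⟩ := A.2.exists_eq_span
    obtain ⟨b, hb, hB⟩ := B.2.exists_eq_span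
    exact ⟨a, b, ha, hb, (frameGraph_adj_iff_Psi hτ2 hS hA).mp hSA,
      (frameGraph_adj_iff_Psi hτ2 hA hB).mp hAB, (frameGraph_adj_iff_Psi hτ2 hB hW).mp hBW⟩
  · rintro ⟨a, b, ha, hb, hsa, hab, hbw⟩
    refine ⟨⟨K ∙ a, isVertex_span_singleton ha⟩, ⟨K ∙ b, isVertex_span_singleton hb⟩, ?_, ?_, ?_⟩
    · exact (frameGraph_adj_iff_Psi hτ2 hS rfl).mpr hsa
    · exact (frameGraph_adj_iff_Psi hτ2 rfl rfl).mpr hab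
    · exact (frameGraph_adj_iff_Psi hτ2 rfl hW).mpr hbw

lemma exists_add_conj_eq_one (hτne : (τ : K → K) ≠ id) (hτ2 : ∀ x, τ (τ x) = x) :
    ∃ ε : K, ε + τ ε = 1 := by
  obtain ⟨x, hx⟩ := Function.ne_iff.mp hτne
  have hδ : x - τ x ≠ 0 := sub_ne_zero.mpr (Ne.symm hx)
  have hδ' : τ x - x ≠ 0 := sub_ne_zero.mpr hx
  refine ⟨x * (x - τ x)⁻¹, ?_⟩
  rw [map_mul, map_inv₀, map_sub, hτ2]
  field_simp
  ring

lemma conj_eq_one_sub_of_fixed_eq_zero_or_one (hτ2 : ∀ x, τ (τ x) = x)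
    (hfix : ∀ x, τ x = x → x = 0 ∨ x = 1) {y : K} (hy : τ y ≠ y) :
    τ y = 1 - y ∧ y * (1 - y) = 1 := by
  have h2 : (2 : K) = 0 := (hfix 2 (map_ofNat τ 2)).resolve_right fun h =>
    one_ne_zero (α := K) (by linear_combination h)
  have htr : y + τ y = 1 := (hfix _ (by rw [map_add, hτ2, add_comm])).resolve_left fun h =>
    hy (by linear_combination h - y * h2)
  have hconj : τ y = 1 - y := by linear_combination htr
  have hy0 : y ≠ 0 := fun h => hy (by rw [h, map_zero])
  have hτy0 : τ y ≠ 0 := fun h => hy0 (by rw [← hτ2 y, h, map_zero])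
  refine ⟨hconj, ?_⟩
  rw [← hconj]
  exact (hfix _ (by rw [map_mul, hτ2, mul_comm])).resolve_left (mul_ne_zero hy0 hτy0)

lemma card_eq_four_iff (hτne : (τ : K → K) ≠ id) (hτ2 : ∀ x, τ (τ x) = x) :
    Nat.card K = 4 ↔ ∀ x, τ x = x → x = 0 ∨ x = 1 := by
  obtain ⟨y, hy⟩ := Function.ne_iff.mp hτne
  replace hy : τ y ≠ y := hy
  constructor
  · intro hcard x hx
    by_contra! h
    -- `0, 1, x` are fixed while `y, y + 1` are not, so these five elements are distinct
    have hne : ∀ z, τ z = z → z ≠ y ∧ z ≠ y + 1 := fun z hz => ⟨fun h' => hy (h' ▸ hz),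
      fun h' => hy (by rw [show y = z - 1 by rw [h']; ring, map_sub, map_one, hz])⟩
    obtain ⟨h0y, h0y'⟩ := hne 0 (map_zero τ)
    obtain ⟨h1y, h1y'⟩ := hne 1 (map_one τ)
    obtain ⟨hxy, hxy'⟩ := hne x hx
    have : Finite K := Nat.finite_of_card_ne_zero (by omega)
    have h5 := Set.ncard_le_card ({0, 1, x, y, y + 1} : Set K)
    rw [Set.ncard_insert_of_notMem, Set.ncard_insert_of_notMem, Set.ncard_insert_of_notMem,
      Set.ncard_pair, hcard] at h5
    · omega
    all_goals simp [h.1.symm, h.2.symm, h0y, h0y', h1y, h1y', hxy, hxy']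
  · intro hfix
    obtain ⟨hconj, hnorm⟩ := conj_eq_one_sub_of_fixed_eq_zero_or_one hτ2 hfix hy
    have huniv : ({0, 1, y, τ y} : Set K) = Set.univ := by
      refine Set.eq_univ_of_forall fun z => ?_
      by_cases hz : τ z = z
      · rcases hfix z hz with rfl | rfl <;> simp
      · have hzy : (z - y) * (z - τ y) = 0 := by
          rw [hconj]
          linear_combination hnorm - (conj_eq_one_sub_of_fixed_eq_zero_or_one hτ2 hfix hz).2
        rcases mul_eq_zero.mp hzy with h | h <;> simp [sub_eq_zero.mp h]
    have hne : ∀ z, τ z = z → z ≠ y ∧ z ≠ τ y := fun z hz =>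
      ⟨fun h => hy (h ▸ hz), fun h => hy (by rw [h, hτ2] at hz; exact hz.symm)⟩
    obtain ⟨h0y, h0y'⟩ := hne 0 (map_zero τ)
    obtain ⟨h1y, h1y'⟩ := hne 1 (map_one τ)
    rw [← Set.ncard_univ, ← huniv, Set.ncard_insert_of_notMem, Set.ncard_insert_of_notMem,
      Set.ncard_pair hy.symm]
    all_goals simp [h0y, h0y', h1y, h1y']

lemma exists_fixed_ne_ne_of_card_ne_four (hτne : (τ : K → K) ≠ id)
    (hτ2 : ∀ x, τ (τ x) = x) (hcard : Nat.card K ≠ 4) (t₁ t₂ : K) :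
    ∃ t, τ t = t ∧ t ≠ t₁ ∧ t ≠ t₂ := by
  obtain ⟨c, hc, hc0, hc1⟩ : ∃ c, τ c = c ∧ c ≠ 0 ∧ c ≠ 1 := by
    simpa [card_eq_four_iff hτne hτ2, not_or] using hcard
  by_contra! h
  have h0 := h 0 (map_zero τ)
  have h1 := h 1 (map_one τ)
  have hc' := h c hc
  rcases eq_or_ne 0 t₁ with rfl | h₀
  · exact hc1 ((hc' hc0).trans (h1 one_ne_zero).symm)
  rcases eq_or_ne 1 t₁ with rfl | h₁
  · exact hc0 ((hc' hc1).trans (h0 h₀).symm)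
  · exact one_ne_zero ((h1 h₁).trans (h0 h₀).symm)

lemma Psi_add_smul_add_smul {x y d : Fin n → K} (hd : Psi τ d d = 0) (l m : K) :
    Psi τ (x + l • d) (y + m • d) = Psi τ x y + τ m * Psi τ x d + l * Psi τ d y := by
  simp only [Psi_add_left, Psi_add_right, Psi_smul_left, Psi_smul_right, hd]
  ring

lemma hasOrthoChain_of_Psi_eq_one (hτne : (τ : K → K) ≠ id) (hτ2 : ∀ x, τ (τ x) = x)
    (hfix : ∀ t₁ t₂ : K, ∃ t, τ t = t ∧ t ≠ t₁ ∧ t ≠ t₂) {s w a b d : Fin n → K}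
    (hsa : Psi τ s a = 0) (hbw : Psi τ b w = 0)
    (hdd : Psi τ d d = 0) (hsd : Psi τ s d = 0) (hdw : Psi τ d w = 0)
    (hda : Psi τ d a = 1) (hdb : Psi τ d b = 1) : HasOrthoChain τ s w := by
  have had : Psi τ a d = 1 := by rw [Psi_swap hτ2, hda, map_one]
  have hbd : Psi τ b d = 1 := by rw [Psi_swap hτ2, hdb, map_one]
  set c := Psi τ a b
  obtain ⟨ε, hε⟩ := exists_add_conj_eq_one hτne hτ2
  -- below, `Ψ(a + l d, a + l d) = Ψ(a, a) - (c + τ c) - t` and `Ψ(b + μ d, b + μ d) = Ψ(b, b) + t`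
  obtain ⟨t, ht, hta, htb⟩ := hfix (Psi τ a a - (c + τ c)) (-Psi τ b b)
  set μ := ε * t
  have hμ : μ + τ μ = t := by rw [map_mul, ht]; linear_combination t * hε
  set l := -(c + τ μ)
  have hl : l + τ l = -(c + τ c) - t := by
    simp only [l, map_neg, map_add, hτ2]; linear_combination -hμ
  refine ⟨a + l • d, b + μ • d, ?_, ?_, ?_, ?_, ?_⟩
  · rw [Psi_add_smul_add_smul hdd, had, hda]
    intro h
    exact hta (by linear_combination -h + hl)
  · rw [Psi_add_smul_add_smul hdd, hbd, hdb]
    intro h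
    exact htb (by linear_combination h - hμ)
  · rw [Psi_add_right, Psi_smul_right, hsa, hsd, mul_zero, add_zero]
  · rw [Psi_add_smul_add_smul hdd, had, hdb]
    simp only [l]
    ring
  · rw [Psi_add_left, Psi_smul_left, hbw, hdw, mul_zero, add_zero]

lemma exists_mem_perp_Psi_eq_one (hτ2 : ∀ x, τ (τ x) = x) {d : Fin n → K} (hd : d ∉ U) :
    ∃ a ∈ perp τ U, Psi τ d a = 1 := by
  obtain ⟨a, ha, hda⟩ : ∃ a ∈ perp τ U, Psi τ d a ≠ 0 := by
    by_contra! h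
    exact hd (perp_perp hτ2 U ▸ fun a ha => h a ha)
  refine ⟨τ (Psi τ d a)⁻¹ • a, (perp τ U).smul_mem _ ha, ?_⟩
  rw [Psi_smul_right, hτ2, inv_mul_cancel₀ hda]

lemma hasOrthoChain_of_isotropic (hτne : (τ : K → K) ≠ id) (hτ2 : ∀ x, τ (τ x) = x)
    (hfix : ∀ t₁ t₂ : K, ∃ t, τ t = t ∧ t ≠ t₁ ∧ t ≠ t₂) {s w d : Fin n → K}
    (hs : Psi τ s s ≠ 0) (hw : Psi τ w w ≠ 0) (hd : d ≠ 0) (hdd : Psi τ d d = 0)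
    (hds : Psi τ d s = 0) (hdw : Psi τ d w = 0) : HasOrthoChain τ s w := by
  have not_mem {x : Fin n → K} (hx : Psi τ x x ≠ 0) (hdx : Psi τ d x = 0) : d ∉ K ∙ x :=
    fun h => hd <| (mem_bot K).mp <| nondeg_span_singleton hx ▸
      ⟨h, mem_perp_span_singleton.mpr hdx⟩
  obtain ⟨a, ha, hda⟩ := exists_mem_perp_Psi_eq_one hτ2 (not_mem hs hds)
  obtain ⟨b, hb, hdb⟩ := exists_mem_perp_Psi_eq_one hτ2 (not_mem hw hdw)
  exact hasOrthoChain_of_Psi_eq_one hτne hτ2 hfix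
    ((Psi_eq_zero_comm hτ2).mp (mem_perp_span_singleton.mp ha)) (mem_perp_span_singleton.mp hb)
    hdd ((Psi_eq_zero_comm hτ2).mp hds) hdw hda hdb

lemma hasOrthoChain_of_anisotropic (hτne : (τ : K → K) ≠ id) (hτ2 : ∀ x, τ (τ x) = x)
    (hn : 3 ≤ n) {s w c : Fin n → K} (hw : Psi τ w w ≠ 0) (hc : Psi τ c c ≠ 0)
    (hsc : Psi τ s c = 0) (hcw : Psi τ c w = 0) : HasOrthoChain τ s w := by
  obtain ⟨b, hb, hbc, hbw⟩ := exists_anisotropic_perp_pair hτne hτ2 hn hc hw hcw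
  exact ⟨c, b, hc, hb, hsc, (Psi_eq_zero_comm hτ2).mp hbc, hbw⟩

lemma hasOrthoChain_of_card_ne_four_or_ne_three_or_nondeg (hτne : (τ : K → K) ≠ id)
    (hτ2 : ∀ x, τ (τ x) = x) (hn : 3 ≤ n)
    {s w : Fin n → K} (hs : Psi τ s s ≠ 0) (hw : Psi τ w w ≠ 0)
    (h : Nat.card K ≠ 4 ∨ n ≠ 3 ∨ Nondeg τ (K ∙ s ⊔ K ∙ w)) : HasOrthoChain τ s w := by
  have hmem {x : Fin n → K} :
      x ∈ perp τ (K ∙ s ⊔ K ∙ w) ↔ Psi τ x s = 0 ∧ Psi τ x w = 0 := by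
    rw [perp_sup, mem_inf, mem_perp_span_singleton, mem_perp_span_singleton]
  have hdimD : n ≤ finrank K (perp τ (K ∙ s ⊔ K ∙ w)) + 2 := by
    have := finrank_perp_add_finrank hτ2 (K ∙ s ⊔ K ∙ w)
    have := finrank_sup_span_singleton_le (K := K) s w
    omega
  set D := perp τ (K ∙ s ⊔ K ∙ w)
  by_cases hD : ∃ c ∈ D, Psi τ c c ≠ 0
  · obtain ⟨c, hcD, hc⟩ := hD
    rw [hmem] at hcD
    exact hasOrthoChain_of_anisotropic hτne hτ2 hn hw hc
      ((Psi_eq_zero_comm hτ2).mp hcD.1) hcD.2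
  push Not at hD
  have hD0 : D ≠ ⊥ := fun hbot => by
    rw [hbot, finrank_bot] at hdimD
    omega
  -- `D` is totally isotropic and orthogonal to `s`, so `2 dim D + 1 ≤ n`
  have hn3 : n = 3 := by
    have := two_mul_finrank_add_finrank_le hτ2 (le_perp_self_of_Psi_self_eq_zero hτne hτ2 hD)
      (nondeg_span_singleton hs) (fun x hx => mem_perp_span_singleton.mpr (hmem.mp hx).1)
    rw [finrank_span_singleton (ne_zero_of_Psi_self_ne_zero hs)] at this
    omega
  have hnondeg : ¬ Nondeg τ (K ∙ s ⊔ K ∙ w) := fun hP => by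
    obtain ⟨c, hc, hcc⟩ := (nondeg_perp hτ2 hP).exists_Psi_self_ne_zero hτne hτ2 hD0
    exact hcc (hD c hc)
  have hcard : Nat.card K ≠ 4 := by tauto
  obtain ⟨d, hdD, hd0⟩ := (Submodule.ne_bot_iff D).mp hD0
  exact hasOrthoChain_of_isotropic hτne hτ2 (exists_fixed_ne_ne_of_card_ne_four hτne hτ2 hcard)
    hs hw hd0 (hD d hdD) (hmem.mp hdD).1 (hmem.mp hdD).2

lemma mem_span_or_mem_span_of_card_eq_four (hτne : (τ : K → K) ≠ id)
    (hτ2 : ∀ x, τ (τ x) = x) (hcard : Nat.card K = 4) {x y z : Fin n → K}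
    (hx : Psi τ x x ≠ 0) (hy : Psi τ y y ≠ 0) (hxy : Psi τ x y = 0) (hz : Psi τ z z ≠ 0)
    (hzxy : z ∈ K ∙ x ⊔ K ∙ y) : z ∈ K ∙ x ∨ z ∈ K ∙ y := by
  have hfix := (card_eq_four_iff hτne hτ2).mp hcard
  have h2 : (2 : K) = 0 := (hfix 2 (map_ofNat τ 2)).resolve_right fun h =>
    one_ne_zero (α := K) (by linear_combination h)
  obtain ⟨_, hu, _, hv, rfl⟩ := mem_sup.mp hzxy
  obtain ⟨α, rfl⟩ := mem_span_singleton.mp hu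
  obtain ⟨β, rfl⟩ := mem_span_singleton.mp hv
  -- each summand `γ τ(γ) Ψ(v,v)` of `Ψ(z,z)` is fixed by `τ`, hence `0` or `1`; and `1 + 1 = 0`
  have hterm (γ : K) {v : Fin n → K} (hv : Psi τ v v ≠ 0) :
      γ = 0 ∨ γ * τ γ * Psi τ v v = 1 :=
    (hfix _ (by rw [map_mul, map_mul, hτ2, ← Psi_swap hτ2]; ring)).imp_left
      fun h => by simpa [hv] using h
  have hzz : Psi τ (α • x + β • y) (α • x + β • y) =
      α * τ α * Psi τ x x + β * τ β * Psi τ y y := by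
    simp only [Psi_add_left, Psi_add_right, Psi_smul_left, Psi_smul_right, hxy,
      (Psi_eq_zero_comm hτ2).mp hxy]
    ring
  rcases hterm α hx with rfl | h₁
  · exact Or.inr (by simpa using smul_mem _ β (mem_span_singleton_self y))
  rcases hterm β hy with rfl | h₂
  · exact Or.inl (by simpa using smul_mem _ α (mem_span_singleton_self x))
  exact absurd (by rw [hzz, h₁, h₂]; linear_combination h2) hz

lemma HasOrthoChain.nondeg_sup_of_card_eq_four {s w : Fin n → K} (h : HasOrthoChain τ s w)
    (hτne : (τ : K → K) ≠ id) (hτ2 : ∀ x, τ (τ x) = x) (hcard : Nat.card K = 4) (hn : n = 3)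
    (hs : Psi τ s s ≠ 0) (hw : Psi τ w w ≠ 0) : Nondeg τ (K ∙ s ⊔ K ∙ w) := by
  obtain ⟨a, b, ha, hb, hsa, hab, hbw⟩ := h
  have hle {x y : Fin n → K} (hxy : Psi τ x y = 0) : K ∙ x ≤ perp τ (K ∙ y) :=
    (span_singleton_le_iff_mem _ _).mpr (mem_perp_span_singleton.mpr hxy)
  have hcomm {x y : Fin n → K} : Psi τ x y = 0 ↔ Psi τ y x = 0 := Psi_eq_zero_comm hτ2
  by_cases hsw : Psi τ s w = 0
  · exact (nondeg_span_singleton hs).sup hτ2 (nondeg_span_singleton hw) (hle (hcomm.mp hsw))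
  obtain ⟨e, he, hea, heb⟩ := exists_anisotropic_perp_pair hτne hτ2 hn.ge ha hb hab
  -- `x ⊥ y ⊥ e ⊥ x` is an orthogonal basis, so `x^⊥ = ⟨y, e⟩`
  have hmem {x y z : Fin n → K} (hx : Psi τ x x ≠ 0) (hy : Psi τ y y ≠ 0) (hxy : Psi τ x y = 0)
      (hex : Psi τ e x = 0) (hey : Psi τ e y = 0) (hz : Psi τ z z ≠ 0) (hxz : Psi τ x z = 0) :
      z ∈ K ∙ y ∨ z ∈ K ∙ e := by
    have hperp : K ∙ y ⊔ K ∙ e = perp τ (K ∙ x) := by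
      refine eq_perp_of_le_perp hτ2 (sup_le (hle (hcomm.mp hxy)) (hle hex)) ?_
      rw [finrank_sup_of_le_perp (nondeg_span_singleton hy) (hle hey),
        finrank_span_singleton (ne_zero_of_Psi_self_ne_zero hx),
        finrank_span_singleton (ne_zero_of_Psi_self_ne_zero hy),
        finrank_span_singleton (ne_zero_of_Psi_self_ne_zero he)]
      omega
    refine mem_span_or_mem_span_of_card_eq_four hτne hτ2 hcard hy he (hcomm.mp hey) hz ?_
    rw [hperp]
    exact mem_perp_span_singleton.mpr (hcomm.mp hxz)
  have hse : s ∈ K ∙ e := (hmem ha hb hab hea heb hs (hcomm.mp hsa)).resolve_left fun h => by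
    obtain ⟨c, rfl⟩ := mem_span_singleton.mp h
    exact hsw (by rw [Psi_smul_left, hbw, mul_zero])
  have hwe : w ∈ K ∙ e := (hmem hb ha (hcomm.mp hab) heb hea hw hbw).resolve_left fun h => by
    obtain ⟨c, rfl⟩ := mem_span_singleton.mp h
    exact hsw (by rw [Psi_smul_right, hsa, mul_zero])
  have he1 : finrank K (K ∙ e) = 1 := finrank_span_singleton (ne_zero_of_Psi_self_ne_zero he)
  rw [← eq_span_singleton_of_mem_of_finrank_eq_one he1 hse (ne_zero_of_Psi_self_ne_zero hs),
    ← eq_span_singleton_of_mem_of_finrank_eq_one he1 hwe (ne_zero_of_Psi_self_ne_zero hw),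
    sup_idem]
  exact nondeg_span_singleton he

end

theorem statement4_general (τ : K →+* K) (hτne : (⇑τ : K → K) ≠ id) (hτ2 : ∀ x, τ (τ x) = x)
    (n : ℕ) (hn : 3 ≤ n)
    (S W : {S : Submodule K (Fin n → K) // IsVertex (⇑τ) S}) :
    (∃ p : (FrameGraph τ hτ2 n).Walk S W, p.length = 3) ↔
      (Nat.card K ≠ 4 ∨ n ≠ 3 ∨ Nondeg (⇑τ) (S.1 ⊔ W.1)) := by
  obtain ⟨s, hs, hS⟩ := S.2.exists_eq_span
  obtain ⟨w, hw, hW⟩ := W.2.exists_eq_span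
  rw [exists_walk_length_eq_three_iff_hasOrthoChain hτ2 hS hW, hS, hW]
  refine ⟨fun h => ?_, hasOrthoChain_of_card_ne_four_or_ne_three_or_nondeg hτne hτ2 hn hs hw⟩
  by_contra! hexc
  exact hexc.2.2 (h.nondeg_sup_of_card_eq_four hτne hτ2 hexc.1 hexc.2.1 hs hw)

/-- For `n ≥ 3`, under condition (ON), for any vertices `S, W` of `G(V)`,
there is a walk of length `3` from `S` to `W` iff `K` does not have exactly `4` elements,
or `n ≠ 3`, or `S + W` is non-degenerate. -/
theorem statement4 (τ : K →+* K) (hτne : (⇑τ : K → K) ≠ id) (hτ2 : ∀ x, τ (τ x) = x)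
    (n : ℕ) (hn : 3 ≤ n)
    (hON : ∀ v : Fin n → K, ∃ x : K, Psi (⇑τ) v v = x * τ x)
    (S W : {S : Submodule K (Fin n → K) // IsVertex (⇑τ) S}) :
    (∃ p : (FrameGraph τ hτ2 n).Walk S W, p.length = 3) ↔
      (Nat.card K ≠ 4 ∨ n ≠ 3 ∨ Nondeg (⇑τ) (S.1 ⊔ W.1)) :=
  statement4_general τ hτne hτ2 n hn S W

end FramePaper
end

section
/- Let n ≥ 2 and assume condition (ON). Then there exists a nonzero vector v ∈ V with Ψ(v,v) = 0 if and only if there exists ζ ∈ K with ζ · τ(ζ) = −1. -/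
namespace FramePaper

variable {K : Type*} [Field K]

lemma Psi_single_left (τ : K → K) {n : ℕ} (i : Fin n) (a : K) (w : Fin n → K) :
    Psi τ (Pi.single i a) w = a * τ (w i) := by
  simp [Psi, Pi.single_apply]

lemma Psi_single_add_single_self (τ : K → K) {n : ℕ} {i j : Fin n} (hij : i ≠ j) (a b : K) :
    Psi τ (Pi.single i a + Pi.single j b) (Pi.single i a + Pi.single j b)
      = a * τ a + b * τ b := by
  simp [Psi_add_left, Psi_single_left, hij, hij.symm]

lemma Psi_update_zero_self (τ : K → K) {n : ℕ} (v : Fin n → K) (i : Fin n) :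
    Psi τ (Function.update v i 0) (Function.update v i 0) = Psi τ v v - v i * τ (v i) := by
  simp only [Psi, Fintype.sum_eq_add_sum_compl i, Function.update_self, zero_mul, zero_add]
  rw [add_sub_cancel_left]
  refine Finset.sum_congr rfl fun j hj => ?_
  rw [Function.update_of_ne (Finset.mem_compl.1 hj ∘ Finset.mem_singleton.2)]

/-- Removing a nonzero coordinate `a` of an isotropic vector leaves a vector of norm
`-a τ(a)`, which by (ON) is also a norm `x τ(x)`; then `ζ = x / a` works. -/
lemma exists_mul_map_eq_neg_one_of_isotropic (τ : K →+* K) {n : ℕ}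
    (hON : ∀ v : Fin n → K, ∃ x : K, Psi (⇑τ) v v = x * τ x)
    {v : Fin n → K} (hv : v ≠ 0) (hiso : Psi (⇑τ) v v = 0) :
    ∃ ζ : K, ζ * τ ζ = -1 := by
  obtain ⟨i, hi : v i ≠ 0⟩ := Function.ne_iff.1 hv
  obtain ⟨x, hx⟩ := hON (Function.update v i 0)
  rw [Psi_update_zero_self, hiso, zero_sub] at hx
  have hτi : τ (v i) ≠ 0 := (map_ne_zero τ).2 hi
  refine ⟨x / v i, ?_⟩
  rw [map_div₀]
  field_simp
  linear_combination -hx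

theorem statement6_general (τ : K →+* K)
    (n : ℕ) (hn : 2 ≤ n)
    (hON : ∀ v : Fin n → K, ∃ x : K, Psi (⇑τ) v v = x * τ x) :
    (∃ v : Fin n → K, v ≠ 0 ∧ Psi (⇑τ) v v = 0) ↔ (∃ ζ : K, ζ * τ ζ = -1) := by
  refine ⟨fun ⟨v, hv, hiso⟩ => exists_mul_map_eq_neg_one_of_isotropic τ hON hv hiso, ?_⟩
  rintro ⟨ζ, hζ⟩
  let i₀ : Fin n := ⟨0, by omega⟩
  let i₁ : Fin n := ⟨1, by omega⟩
  have h01 : i₀ ≠ i₁ := by simp [i₀, i₁, Fin.ext_iff]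
  refine ⟨Pi.single i₀ ζ + Pi.single i₁ 1, fun h => ?_, ?_⟩
  · simpa [h01.symm] using congrFun h i₁
  · rw [Psi_single_add_single_self _ h01, hζ, map_one]
    ring

/-- For `n ≥ 2`, under condition (ON), there exists a nonzero isotropic
vector in `V` iff there exists `ζ ∈ K` with `ζ * τ(ζ) = -1`. -/
theorem statement6 (τ : K →+* K) (hτne : (⇑τ : K → K) ≠ id) (hτ2 : ∀ x, τ (τ x) = x)
    (n : ℕ) (hn : 2 ≤ n)
    (hON : ∀ v : Fin n → K, ∃ x : K, Psi (⇑τ) v v = x * τ x) :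
    (∃ v : Fin n → K, v ≠ 0 ∧ Psi (⇑τ) v v = 0) ↔ (∃ ζ : K, ζ * τ ζ = -1) :=
  statement6_general τ n hn hON

end FramePaper
end
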